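/- arXiv:1110.4669 — 2 statements merged into one kernel-verified Lean document; each statement's English description precedes it below -/
import Mathlib

section
/- For all λ > 0, ν > 0 with κ = 2λ/ν², every ρ ∈ ℝ, every strictly positive function û : ℝ → (0,∞), all Δ₁ > 0, Δ₂ > 0 and all x₁, x₂, x ∈ ℝ, the bridge density of the Doob h-transform p_X^{(ρ)}(t; x₀, x) = e^{−ρt}(û(x)/û(x₀)) p_X(t; x₀, x) of the Ornstein–Uhlenbeck density is the normal density: p_X^{(ρ)}(Δ₁; x₁, x) · p_X^{(ρ)}(Δ₂; x, x₂) / p_X^{(ρ)}(Δ₁+Δ₂; x₁, x₂) = (1/√(2πb²)) · exp(−(x−μ)²/(2b²)), where μ = [x₁ e^{λΔ₁}(e^{2λΔ₂} − 1) + x₂ e^{λΔ₂}(e^{2λΔ₁} − 1)] / (e^{2λ(Δ₁+Δ₂)} − 1) and b² = (e^{2λΔ₁} − 1)(e^{2λΔ₂} − 1) / (κ(e^{2λ(Δ₁+Δ₂)} − 1)). -/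
open MeasureTheory Real

/-- The Ornstein–Uhlenbeck transition probability density with `κ = 2λ/ν²`. -/
noncomputable def ouDensity (lam nu t x0 x : ℝ) : ℝ :=
  Real.sqrt ((2 * lam / nu ^ 2) / (2 * Real.pi * (1 - Real.exp (-2 * lam * t)))) *
    Real.exp (-((2 * lam / nu ^ 2) * (x - x0 * Real.exp (-lam * t)) ^ 2) /
      (2 * (1 - Real.exp (-2 * lam * t))))

/-- The Doob h-transformed kernel `p^{(ρ)}(t; x₀, x) = e^{−ρt} (û(x)/û(x₀)) p(t; x₀, x)`. -/
noncomputable def doobKernel (p : ℝ → ℝ → ℝ → ℝ) (ρ : ℝ) (u : ℝ → ℝ)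
    (t x0 x : ℝ) : ℝ :=
  Real.exp (-ρ * t) * (u x / u x0) * p t x0 x

/-!
The factors `e^{-ρt}` and `û(x)/û(x₀)` of the h-transform cancel in the bridge ratio, because
`ρ t` is additive in `t` and the ratios of `û` telescope. The Ornstein–Uhlenbeck density is the
normal density with mean `e^{-λt} x₀` and variance `v(t) = (1 - e^{-2λt})/κ`, and
`v(s + t) = e^{-2λt} v(s) + v(t)`. Hence the bridge ratio is an instance of Gaussian conditioning:
if `x ~ N(m, v₁)` and `y ~ N(a x, v₂)` given `x`, then `y ~ N(a m, a² v₁ + v₂)` and `x` given `y`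
is normal with variance `v₁ v₂ / (a² v₁ + v₂)`; the paper's `μ` and `b²` are these parameters
written in terms of `e^{λΔᵢ}`.
-/

/-- The normal density with a real variance parameter (`ProbabilityTheory.gaussianPDFReal` takes
the variance in `ℝ≥0`). -/
noncomputable def normalDensity (m v x : ℝ) : ℝ :=
  1 / √(2 * π * v) * exp (-(x - m) ^ 2 / (2 * v))

theorem normalDensity_mul_normalDensity_div {v₁ v₂ : ℝ} (hv₁ : 0 < v₁) (hv₂ : 0 < v₂)
    (m a x y : ℝ) :
    normalDensity m v₁ x * normalDensity (a * x) v₂ y / normalDensity (a * m) (a ^ 2 * v₁ + v₂) y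
      = normalDensity ((m * v₂ + a * y * v₁) / (a ^ 2 * v₁ + v₂))
          (v₁ * v₂ / (a ^ 2 * v₁ + v₂)) x := by
  have hw : 0 < a ^ 2 * v₁ + v₂ := by positivity
  have hnorm : 1 / √(2 * π * v₁) * (1 / √(2 * π * v₂)) / (1 / √(2 * π * (a ^ 2 * v₁ + v₂)))
      = 1 / √(2 * π * (v₁ * v₂ / (a ^ 2 * v₁ + v₂))) := by
    simp only [one_div, ← sqrt_inv]
    rw [← sqrt_mul (by positivity), ← sqrt_div' _ (by positivity)]
    congr 1
    field_simp
  have hexp : exp (-(x - m) ^ 2 / (2 * v₁)) * exp (-(y - a * x) ^ 2 / (2 * v₂))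
        / exp (-(y - a * m) ^ 2 / (2 * (a ^ 2 * v₁ + v₂)))
      = exp (-(x - (m * v₂ + a * y * v₁) / (a ^ 2 * v₁ + v₂)) ^ 2
          / (2 * (v₁ * v₂ / (a ^ 2 * v₁ + v₂)))) := by
    rw [← exp_add, ← exp_sub]
    congr 1
    field_simp
    ring
  unfold normalDensity
  rw [← hnorm, ← hexp]
  ring

theorem doobKernel_mul_doobKernel_div (p : ℝ → ℝ → ℝ → ℝ) (ρ : ℝ) {u : ℝ → ℝ}
    (hu : ∀ x, u x ≠ 0) (s t x₀ x y : ℝ) :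
    doobKernel p ρ u s x₀ x * doobKernel p ρ u t x y / doobKernel p ρ u (s + t) x₀ y
      = p s x₀ x * p t x y / p (s + t) x₀ y := by
  have hu₀ := hu x₀
  have hux := hu x
  have huy := hu y
  unfold doobKernel
  rw [mul_add, exp_add]
  by_cases hp : p (s + t) x₀ y = 0
  · simp [hp]
  · field_simp

noncomputable def ouVariance (lam nu t : ℝ) : ℝ :=
  (1 - exp (-2 * lam * t)) / (2 * lam / nu ^ 2)

theorem ouDensity_eq_normalDensity (lam nu t x₀ x : ℝ) :
    ouDensity lam nu t x₀ x = normalDensity (exp (-lam * t) * x₀) (ouVariance lam nu t) x := by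
  unfold ouDensity normalDensity ouVariance
  rw [one_div, ← sqrt_inv, mul_div_assoc', inv_div, mul_div_assoc', div_div_eq_mul_div]
  ring_nf

theorem ouVariance_pos {lam nu t : ℝ} (hlam : 0 < lam) (hnu : nu ≠ 0) (ht : 0 < t) :
    0 < ouVariance lam nu t := by
  have : exp (-2 * lam * t) < 1 := exp_lt_one_iff.2 (by nlinarith)
  unfold ouVariance
  exact div_pos (by linarith) (by positivity)

theorem ouVariance_add (lam nu s t : ℝ) :
    ouVariance lam nu (s + t) = exp (-lam * t) ^ 2 * ouVariance lam nu s + ouVariance lam nu t := by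
  have hsplit : exp (-2 * lam * (s + t)) = exp (-2 * lam * s) * exp (-2 * lam * t) := by
    rw [← exp_add]
    ring_nf
  have hsq : exp (-lam * t) ^ 2 = exp (-2 * lam * t) := by
    rw [← exp_nat_mul]
    ring_nf
  unfold ouVariance
  rw [hsplit, hsq]
  ring

theorem ouDensity_add (lam nu s t x₀ x : ℝ) :
    ouDensity lam nu (s + t) x₀ x
      = normalDensity (exp (-lam * t) * (exp (-lam * s) * x₀))
          (exp (-lam * t) ^ 2 * ouVariance lam nu s + ouVariance lam nu t) x := by
  rw [ouDensity_eq_normalDensity, ← ouVariance_add, ← mul_assoc, ← exp_add]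
  ring_nf

theorem ouVariance_eq (lam nu t : ℝ) :
    ouVariance lam nu t = (exp (2 * lam * t) - 1) / (2 * lam / nu ^ 2 * exp (2 * lam * t)) := by
  have hinv : exp (-2 * lam * t) = (exp (2 * lam * t))⁻¹ := by
    rw [← exp_neg]
    ring_nf
  unfold ouVariance
  rw [hinv]
  field_simp

theorem exp_two_mul_mul_exp_two_mul_ne_one {lam s t : ℝ} (hlam : lam ≠ 0) (hst : s + t ≠ 0) :
    exp (2 * lam * s) * exp (2 * lam * t) ≠ 1 := by
  rw [← exp_add, Ne, exp_eq_one_iff, ← mul_add]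
  simp [hlam, hst]

theorem ouBridge_variance_eq {lam nu s t : ℝ} (hlam : lam ≠ 0) (hnu : nu ≠ 0) (hst : s + t ≠ 0) :
    ouVariance lam nu s * ouVariance lam nu t / ouVariance lam nu (s + t)
      = (exp (2 * lam * s) - 1) * (exp (2 * lam * t) - 1)
          / (2 * lam / nu ^ 2 * (exp (2 * lam * (s + t)) - 1)) := by
  have hne := sub_ne_zero.2 (exp_two_mul_mul_exp_two_mul_ne_one hlam hst)
  rw [ouVariance_eq, ouVariance_eq, ouVariance_eq, mul_add, exp_add]
  field_simp

theorem ouBridge_mean_eq {lam nu s t : ℝ} (hlam : lam ≠ 0) (hnu : nu ≠ 0) (hst : s + t ≠ 0)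
    (x₀ y : ℝ) :
    (exp (-lam * s) * x₀ * ouVariance lam nu t + exp (-lam * t) * y * ouVariance lam nu s)
        / ouVariance lam nu (s + t)
      = (x₀ * exp (lam * s) * (exp (2 * lam * t) - 1)
          + y * exp (lam * t) * (exp (2 * lam * s) - 1)) / (exp (2 * lam * (s + t)) - 1) := by
  have hne := sub_ne_zero.2 (exp_two_mul_mul_exp_two_mul_ne_one hlam hst)
  have hsq (r : ℝ) : exp (2 * lam * r) = exp (lam * r) ^ 2 := by
    rw [← exp_nat_mul]
    ring_nf
  have hinv (r : ℝ) : exp (-lam * r) = (exp (lam * r))⁻¹ := by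
    rw [← exp_neg]
    ring_nf
  rw [hsq, hsq] at hne
  rw [ouVariance_eq, ouVariance_eq, ouVariance_eq, mul_add, exp_add, hinv, hinv, hsq s, hsq t]
  field_simp

/-- the bridge density of the Doob h-transform of the Ornstein–Uhlenbeck
transition density is the normal density with mean `μ` and variance `b²` of Eq. (11). -/
theorem doob_ou_bridge_density_normal (lam nu : ℝ) (hlam : 0 < lam) (hnu : 0 < nu)
    (ρ : ℝ) (u : ℝ → ℝ) (hu : ∀ x, 0 < u x)
    (Δ1 Δ2 : ℝ) (h1 : 0 < Δ1) (h2 : 0 < Δ2) (x1 x2 x : ℝ) :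
    let κ := 2 * lam / nu ^ 2
    let μ := (x1 * Real.exp (lam * Δ1) * (Real.exp (2 * lam * Δ2) - 1)
        + x2 * Real.exp (lam * Δ2) * (Real.exp (2 * lam * Δ1) - 1)) /
        (Real.exp (2 * lam * (Δ1 + Δ2)) - 1)
    let b2 := (Real.exp (2 * lam * Δ1) - 1) * (Real.exp (2 * lam * Δ2) - 1) /
        (κ * (Real.exp (2 * lam * (Δ1 + Δ2)) - 1))
    doobKernel (ouDensity lam nu) ρ u Δ1 x1 x * doobKernel (ouDensity lam nu) ρ u Δ2 x x2 /
        doobKernel (ouDensity lam nu) ρ u (Δ1 + Δ2) x1 x2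
      = (1 / Real.sqrt (2 * Real.pi * b2)) * Real.exp (-(x - μ) ^ 2 / (2 * b2)) := by
  intro κ μ b2
  have hΔ : Δ1 + Δ2 ≠ 0 := by positivity
  rw [doobKernel_mul_doobKernel_div _ _ (fun y => (hu y).ne'), ouDensity_add,
    ouDensity_eq_normalDensity, ouDensity_eq_normalDensity,
    normalDensity_mul_normalDensity_div (ouVariance_pos hlam hnu.ne' h1)
      (ouVariance_pos hlam hnu.ne' h2),
    ← ouVariance_add, ouBridge_mean_eq hlam.ne' hnu.ne' hΔ,
    ouBridge_variance_eq hlam.ne' hnu.ne' hΔ]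
  rfl
end

section
/- Let λ > 0, ν > 0, ρ ∈ ℝ, c > 0 and set κ = 2λ/ν². Let f, g : ℝ → ℝ be twice differentiable functions both satisfying (ν²/2) φ''(x) − λ x φ'(x) = ρ φ(x) for all x, with g(x) > 0 for all x. Define F(x) = c f(x)/g(x) and σ(F(x)) = ν F'(x). Then the diffusion coefficient has the form σ(F(x)) = σ₀ · 𝔰(x)/g(x)² for all x ∈ ℝ, where σ₀ = ν c (g(0)f'(0) − g'(0)f(0)) is a constant and 𝔰(x) = e^{κx²/2} is the scale density of the Ornstein–Uhlenbeck diffusion. -/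
open Real

/-!
The Wronskian `W = g f' - g' f` of two solutions of `φ'' = κ x φ' + q φ` obeys Abel's equation
`W' = κ x W`, so `W x = W 0 · e^{κx²/2}`, i.e. `W` is a constant multiple of the scale density.
Since `(f / g)' = W / g²`, this gives the stated form of `ν F'`.
-/

theorem hasDerivAt_wronskian {f f' f'' g g' g'' p q : ℝ → ℝ} {x : ℝ} (hf : HasDerivAt f (f' x) x) (hf' : HasDerivAt f' (f'' x) x)
    (hg : HasDerivAt g (g' x) x) (hg' : HasDerivAt g' (g'' x) x)
    (hfode : f'' x = p x * f' x + q x * f x) (hgode : g'' x = p x * g' x + q x * g x) :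
    HasDerivAt (fun y => g y * f' y - g' y * f y) (p x * (g x * f' x - g' x * f x)) x :=
  ((hg.mul hf').sub (hg'.mul hf)).congr_deriv <| by
    rw [hfode, hgode]; ring

theorem eq_mul_exp_sub_of_hasDerivAt {W a A : ℝ → ℝ} (hA : ∀ x, HasDerivAt A (a x) x)
    (hW : ∀ x, HasDerivAt W (a x * W x) x) (x y : ℝ) :
    W x = W y * exp (A x - A y) := by
  have hconst : ∀ z, HasDerivAt (fun z => W z * exp (-A z)) 0 z := fun z =>
    ((hW z).mul (hA z).neg.exp).congr_deriv (by ring)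
  have h := is_const_of_deriv_eq_zero (fun z => (hconst z).differentiableAt)
    (fun z => (hconst z).deriv) x y
  calc W x = W x * exp (-A x) * exp (A x) := by rw [mul_assoc, ← exp_add]; simp
    _ = W y * exp (A x - A y) := by
      rw [h, mul_assoc, ← exp_add]; ring_nf

theorem hasDerivAt_mul_sq_div_two (κ x : ℝ) :
    HasDerivAt (fun y => κ * y ^ 2 / 2) (κ * x) x :=
  (((hasDerivAt_pow 2 x).const_mul κ).div_const 2).congr_deriv (by ring)

theorem eq_mul_exp_of_hasDerivAt_mul_id {W : ℝ → ℝ} {κ : ℝ}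
    (hW : ∀ x, HasDerivAt W (κ * x * W x) x) (x : ℝ) :
    W x = W 0 * exp (κ * x ^ 2 / 2) := by
  simpa using eq_mul_exp_sub_of_hasDerivAt (hasDerivAt_mul_sq_div_two κ) hW x 0

theorem eq_of_ou_ode {lam nu ρ φ φ' φ'' x : ℝ} (hnu : nu ≠ 0)
    (h : nu ^ 2 / 2 * φ'' - lam * x * φ' = ρ * φ) :
    φ'' = 2 * lam / nu ^ 2 * x * φ' + 2 * ρ / nu ^ 2 * φ := by
  field_simp
  linear_combination 2 * h

theorem deriv_const_mul_div {f f' g g' : ℝ → ℝ} {x : ℝ} (c : ℝ) (hf : HasDerivAt f (f' x) x)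
    (hg : HasDerivAt g (g' x) x) (hgx : g x ≠ 0) :
    deriv (fun y => c * f y / g y) x = c * (g x * f' x - g' x * f x) / g x ^ 2 := by
  have h := (hf.const_mul c).div hg hgx
  rw [show (fun y => c * f y / g y) = (fun y => c * f y) / g from rfl, h.deriv]
  ring

theorem ou_diffusion_coefficient_form_general (lam nu ρ c : ℝ) (hnu : 0 < nu)
    (f f' f'' g g' g'' : ℝ → ℝ)
    (hf : ∀ x, HasDerivAt f (f' x) x) (hf' : ∀ x, HasDerivAt f' (f'' x) x)
    (hg : ∀ x, HasDerivAt g (g' x) x) (hg' : ∀ x, HasDerivAt g' (g'' x) x)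
    (hgpos : ∀ x, 0 < g x)
    (hfode : ∀ x, nu ^ 2 / 2 * f'' x - lam * x * f' x = ρ * f x)
    (hgode : ∀ x, nu ^ 2 / 2 * g'' x - lam * x * g' x = ρ * g x) :
    ∀ x, nu * deriv (fun y => c * f y / g y) x
      = (nu * c * (g 0 * f' 0 - g' 0 * f 0)) *
          Real.exp ((2 * lam / nu ^ 2) * x ^ 2 / 2) / (g x) ^ 2 := by
  intro x
  have hW := eq_mul_exp_of_hasDerivAt_mul_id (fun y =>
    hasDerivAt_wronskian (p := fun y => 2 * lam / nu ^ 2 * y) (q := fun _ => 2 * ρ / nu ^ 2)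
      (hf y) (hf' y) (hg y) (hg' y) (eq_of_ou_ode hnu.ne' (hfode y))
      (eq_of_ou_ode hnu.ne' (hgode y))) x
  rw [deriv_const_mul_div c (hf x) (hg x) (hgpos x).ne', hW]
  ring

/-- for two solutions `f, g` (with `g > 0`) of the Ornstein–Uhlenbeck
eigenvalue equation `(ν²/2) φ'' − λx φ' = ρ φ`, the map `F(x) = c f(x)/g(x)` yields the
diffusion coefficient `σ(F(x)) = ν F'(x) = σ₀ 𝔰(x)/g(x)²` with
`σ₀ = ν c (g(0)f'(0) − g'(0)f(0))` and scale density `𝔰(x) = e^{κx²/2}`, `κ = 2λ/ν²`. -/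
theorem ou_diffusion_coefficient_form (lam nu ρ c : ℝ) (hlam : 0 < lam) (hnu : 0 < nu)
    (hc : 0 < c) (f f' f'' g g' g'' : ℝ → ℝ)
    (hf : ∀ x, HasDerivAt f (f' x) x) (hf' : ∀ x, HasDerivAt f' (f'' x) x)
    (hg : ∀ x, HasDerivAt g (g' x) x) (hg' : ∀ x, HasDerivAt g' (g'' x) x)
    (hgpos : ∀ x, 0 < g x)
    (hfode : ∀ x, nu ^ 2 / 2 * f'' x - lam * x * f' x = ρ * f x)
    (hgode : ∀ x, nu ^ 2 / 2 * g'' x - lam * x * g' x = ρ * g x) :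
    ∀ x, nu * deriv (fun y => c * f y / g y) x
      = (nu * c * (g 0 * f' 0 - g' 0 * f 0)) *
          Real.exp ((2 * lam / nu ^ 2) * x ^ 2 / 2) / (g x) ^ 2 :=
  ou_diffusion_coefficient_form_general lam nu ρ c hnu f f' f'' g g' g'' hf hf' hg hg' hgpos hfode
    hgode
end
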